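/- arXiv:2601.22443 — 2 statements merged into one kernel-verified Lean document; each statement's English description precedes it below -/
import Mathlib

section
/- Let y* ∈ ℝ^m, A ∈ ℝ^{m×n}, σ, τ > 0, and let μ_1, …, μ_M ∈ ℝ^n with positive weights w_1, …, w_M summing to 1. Set Σ = σ² I_m + τ² A Aᵀ, s_j(y*) = (1/2)(y* − A μ_j)ᵀ Σ⁻¹ (y* − A μ_j), and w̃_j ∝ w_j · φ(y*; A μ_j, Σ) normalized so that ∑_j w̃_j = 1. Define the posterior means m_j(y*) = μ_j + τ² Aᵀ Σ⁻¹ (y* − A μ_j) and posterior covariance Σ_post = τ² I_n − τ⁴ Aᵀ Σ⁻¹ A, and let π(· | y*) be the mixture probability measure ∑_{j=1}^M w̃_j N(m_j(y*), Σ_post) on ℝ^n. Assume (1) there exists C > 1 with 1/C ≤ w_i/w_j ≤ C for all i, j, and (2) there is a unique minimizer j* of s_j(y*) with per-dimension score gap (s_{(2)}(y*) − s_{(1)}(y*))/m ≥ δ₀ > 0. Then the total-variation distance satisfies ‖π(· | y*) − N(m_{j*}(y*), Σ_post)‖_TV ≤ C·M·exp(−δ₀·m). -/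
/-!
The posterior weights are proportional to `w_j exp(-s_j)`, so the score gap and the bounded
weight ratio make every component other than `j*` carry weight at most `C exp(-δ₀ m)`.
The components are Gaussian probability measures, so on any set the mixture differs from its
`j*` component by at most the total weight of the other components.
-/

open MeasureTheory Matrix Finset

/-- Multivariate Gaussian density `φ(x; μ, S)` on `ℝ^ι`. -/
noncomputable def gaussDensity {ι : Type*} [Fintype ι] [DecidableEq ι]
    (S : Matrix ι ι ℝ) (μ x : ι → ℝ) : ℝ :=
  (2 * Real.pi) ^ (-(Fintype.card ι : ℝ) / 2) * S.det ^ (-(1 : ℝ) / 2) *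
    Real.exp (-(1 / 2) * ((x - μ) ⬝ᵥ (S⁻¹ *ᵥ (x - μ))))

/-- The Gaussian probability measure `N(μ, S)` on `ℝ^ι`, given through its
Lebesgue density. -/
noncomputable def gaussMeasure {ι : Type*} [Fintype ι] [DecidableEq ι]
    (S : Matrix ι ι ℝ) (μ : ι → ℝ) : Measure (ι → ℝ) :=
  volume.withDensity fun x => ENNReal.ofReal (gaussDensity S μ x)

section ChangeOfVariables

variable {ι : Type*} [Fintype ι] [DecidableEq ι] {B : Matrix ι ι ℝ}

noncomputable def mulVecMeasurableEquiv (hB : B.det ≠ 0) : (ι → ℝ) ≃ᵐ (ι → ℝ) :=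
  ((Matrix.toLin' B).equivOfDetNeZero (by rwa [LinearMap.det_toLin'])).toContinuousLinearEquiv
    |>.toHomeomorph.toMeasurableEquiv

lemma map_mulVecMeasurableEquiv_volume (hB : B.det ≠ 0) :
    Measure.map (mulVecMeasurableEquiv hB) volume = ENNReal.ofReal |B.det⁻¹| • volume :=
  Real.map_matrix_volume_pi_eq_smul_volume_pi hB

variable {E : Type*} [NormedAddCommGroup E]

lemma integrable_comp_mulVec {f : (ι → ℝ) → E} (hf : Integrable f) (hB : B.det ≠ 0) :
    Integrable (fun x => f (B *ᵥ x)) := by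
  have := (integrable_map_equiv (mulVecMeasurableEquiv hB) f (μ := volume)).1
  rw [map_mulVecMeasurableEquiv_volume] at this
  exact this (hf.smul_measure ENNReal.ofReal_ne_top)

lemma integral_comp_mulVec [NormedSpace ℝ E] (f : (ι → ℝ) → E) (hB : B.det ≠ 0) :
    ∫ x, f (B *ᵥ x) = |B.det|⁻¹ • ∫ y, f y := by
  have := integral_map_equiv (mulVecMeasurableEquiv hB) f (μ := volume)
  rw [map_mulVecMeasurableEquiv_volume, integral_smul_measure] at this
  rw [← abs_inv, ← ENNReal.toReal_ofReal (abs_nonneg B.det⁻¹), this]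
  rfl

end ChangeOfVariables

section GaussianIntegral

variable {ι : Type*} [Fintype ι]

lemma exp_neg_half_dotProduct_self (y : ι → ℝ) :
    Real.exp (-(1 / 2) * (y ⬝ᵥ y)) = ∏ i, Real.exp (-(1 / 2) * y i ^ 2) := by
  simp only [dotProduct, Finset.mul_sum, ← Real.exp_sum, sq]

lemma integrable_exp_neg_half_dotProduct_self :
    Integrable fun y : ι → ℝ => Real.exp (-(1 / 2) * (y ⬝ᵥ y)) := by
  simp only [exp_neg_half_dotProduct_self]
  exact Integrable.fintype_prod fun _ => integrable_exp_neg_mul_sq (by norm_num)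

lemma integral_exp_neg_half_dotProduct_self :
    ∫ y : ι → ℝ, Real.exp (-(1 / 2) * (y ⬝ᵥ y)) = Real.sqrt (2 * Real.pi) ^ Fintype.card ι := by
  simp only [exp_neg_half_dotProduct_self]
  rw [integral_fintype_prod_volume_eq_pow (fun t : ℝ => Real.exp (-(1 / 2) * t ^ 2)),
    integral_gaussian]
  congr 2
  ring

lemma dotProduct_transpose_mul_self_mulVec (B : Matrix ι ι ℝ) (x : ι → ℝ) :
    x ⬝ᵥ ((Bᵀ * B) *ᵥ x) = (B *ᵥ x) ⬝ᵥ (B *ᵥ x) := by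
  rw [← mulVec_mulVec, dotProduct_mulVec, vecMul_transpose]

variable [DecidableEq ι] {Q : Matrix ι ι ℝ}

open scoped MatrixOrder in
lemma Matrix.PosDef.exists_eq_transpose_mul_self (hQ : Q.PosDef) :
    ∃ B : Matrix ι ι ℝ, Q = Bᵀ * B := by
  obtain ⟨B, rfl⟩ := CStarAlgebra.nonneg_iff_eq_star_mul_self.mp hQ.posSemidef.nonneg
  exact ⟨B, rfl⟩

lemma det_ne_zero_of_posDef_transpose_mul_self {B : Matrix ι ι ℝ} (hQ : (Bᵀ * B).PosDef) :
    B.det ≠ 0 := by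
  have := hQ.det_pos
  rw [det_mul, det_transpose] at this
  exact left_ne_zero_of_mul this.ne'

lemma integrable_exp_neg_half_dotProduct_mulVec (hQ : Q.PosDef) :
    Integrable fun x : ι → ℝ => Real.exp (-(1 / 2) * (x ⬝ᵥ (Q *ᵥ x))) := by
  obtain ⟨B, rfl⟩ := hQ.exists_eq_transpose_mul_self
  simp only [dotProduct_transpose_mul_self_mulVec]
  exact integrable_comp_mulVec integrable_exp_neg_half_dotProduct_self
    (det_ne_zero_of_posDef_transpose_mul_self hQ)

lemma integral_exp_neg_half_dotProduct_mulVec (hQ : Q.PosDef) :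
    ∫ x : ι → ℝ, Real.exp (-(1 / 2) * (x ⬝ᵥ (Q *ᵥ x))) =
      (Real.sqrt Q.det)⁻¹ * Real.sqrt (2 * Real.pi) ^ Fintype.card ι := by
  obtain ⟨B, rfl⟩ := hQ.exists_eq_transpose_mul_self
  simp only [dotProduct_transpose_mul_self_mulVec]
  rw [integral_comp_mulVec (fun y => Real.exp (-(1 / 2) * (y ⬝ᵥ y)))
    (det_ne_zero_of_posDef_transpose_mul_self hQ), integral_exp_neg_half_dotProduct_self,
    det_mul, det_transpose, Real.sqrt_mul_self_eq_abs, smul_eq_mul]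

end GaussianIntegral

lemma div_sum_mul_le_div_mul_div {ι : Type*} [Fintype ι] {w φ : ι → ℝ} (hw : ∀ i, 0 < w i)
    (hφ : ∀ i, 0 < φ i) (j k : ι) :
    w j * φ j / ∑ i, w i * φ i ≤ w j / w k * (φ j / φ k) := by
  rw [div_mul_div_comm]
  exact div_le_div_of_nonneg_left (mul_pos (hw j) (hφ j)).le (mul_pos (hw k) (hφ k))
    (single_le_sum (fun i _ => (mul_pos (hw i) (hφ i)).le) (mem_univ k))

section GaussianMeasure

variable {ι : Type*} [Fintype ι] [DecidableEq ι] {S : Matrix ι ι ℝ}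

lemma gaussDensity_pos (hS : 0 < S.det) (μ x : ι → ℝ) : 0 < gaussDensity S μ x := by
  unfold gaussDensity
  positivity

lemma gaussDensity_div_gaussDensity (hS : 0 < S.det) (a b x : ι → ℝ) :
    gaussDensity S a x / gaussDensity S b x =
      Real.exp ((1 / 2) * ((x - b) ⬝ᵥ (S⁻¹ *ᵥ (x - b))) -
        (1 / 2) * ((x - a) ⬝ᵥ (S⁻¹ *ᵥ (x - a)))) := by
  unfold gaussDensity
  rw [mul_div_mul_left _ _ (by positivity), ← Real.exp_sub]
  ring_nf

lemma mul_gaussDensity_div_sum_le {κ : Type*} [Fintype κ] (hS : 0 < S.det) {w : κ → ℝ}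
    (hw : ∀ i, 0 < w i) (a : κ → ι → ℝ) (x : ι → ℝ) (j k : κ) :
    w j * gaussDensity S (a j) x / ∑ i, w i * gaussDensity S (a i) x ≤
      w j / w k * Real.exp ((1 / 2) * ((x - a k) ⬝ᵥ (S⁻¹ *ᵥ (x - a k))) -
        (1 / 2) * ((x - a j) ⬝ᵥ (S⁻¹ *ᵥ (x - a j)))) := by
  rw [← gaussDensity_div_gaussDensity hS]
  exact div_sum_mul_le_div_mul_div hw (fun i => gaussDensity_pos hS _ _) j k

lemma integrable_gaussDensity (hS : S.PosDef) (μ : ι → ℝ) : Integrable (gaussDensity S μ) :=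
  ((integrable_exp_neg_half_dotProduct_mulVec hS.inv).comp_sub_right μ).const_mul _

lemma integral_gaussDensity (hS : S.PosDef) (μ : ι → ℝ) : ∫ x, gaussDensity S μ x = 1 := by
  have h2π : 0 < 2 * Real.pi := by positivity
  unfold gaussDensity
  rw [integral_const_mul, integral_sub_right_eq_self
      (fun x => Real.exp (-(1 / 2) * (x ⬝ᵥ (S⁻¹ *ᵥ x)))),
    integral_exp_neg_half_dotProduct_mulVec hS.inv, det_nonsing_inv, Ring.inverse_eq_inv',
    Real.sqrt_inv, inv_inv, Real.sqrt_eq_rpow, Real.sqrt_eq_rpow, ← Real.rpow_natCast,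
    ← Real.rpow_mul h2π.le]
  have hpi : (2 * Real.pi) ^ (-(Fintype.card ι : ℝ) / 2) *
      (2 * Real.pi) ^ (1 / 2 * (Fintype.card ι : ℝ)) = 1 := by
    rw [← Real.rpow_add h2π, neg_div, one_div_mul_eq_div, neg_add_cancel, Real.rpow_zero]
  have hdet : S.det ^ (-1 / 2 : ℝ) * S.det ^ (1 / 2 : ℝ) = 1 := by
    rw [← Real.rpow_add hS.det_pos]
    norm_num
  linear_combination (S.det ^ (-1 / 2 : ℝ) * S.det ^ (1 / 2 : ℝ)) * hpi + hdet

lemma isProbabilityMeasure_gaussMeasure (hS : S.PosDef) (μ : ι → ℝ) :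
    IsProbabilityMeasure (gaussMeasure S μ) := by
  constructor
  rw [gaussMeasure, withDensity_apply _ MeasurableSet.univ, Measure.restrict_univ,
    ← ofReal_integral_eq_lintegral_ofReal (integrable_gaussDensity hS μ)
      (.of_forall fun x => (gaussDensity_pos hS.det_pos μ x).le),
    integral_gaussDensity hS, ENNReal.ofReal_one]

end GaussianMeasure

section Covariances

lemma Matrix.inv_smul_one {n K : Type*} [Fintype n] [DecidableEq n] [Field K] {c : K}
    (hc : c ≠ 0) : (c • (1 : Matrix n n K))⁻¹ = c⁻¹ • 1 :=
  inv_eq_left_inv (by simp [smul_smul, hc])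

variable {m n : Type*} [Fintype m] [Fintype n] [DecidableEq m]

lemma posDef_smul_one_add_smul_mul_transpose {σ : ℝ} (hσ : σ ≠ 0) (τ : ℝ) (A : Matrix m n ℝ) :
    (σ ^ 2 • (1 : Matrix m m ℝ) + τ ^ 2 • (A * Aᵀ)).PosDef :=
  (PosDef.one.smul (by positivity)).add_posSemidef
    ((posSemidef_self_mul_conjTranspose A).smul (sq_nonneg τ))

/- By the Woodbury identity, the posterior covariance is the inverse of the posterior precision
`τ⁻² I + σ⁻² AᵀA`. -/
lemma posDef_posteriorCov [DecidableEq n] {σ τ : ℝ} (hσ : σ ≠ 0) (hτ : τ ≠ 0)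
    (A : Matrix m n ℝ) :
    (τ ^ 2 • (1 : Matrix n n ℝ) -
      τ ^ 4 • (Aᵀ * (σ ^ 2 • (1 : Matrix m m ℝ) + τ ^ 2 • (A * Aᵀ))⁻¹ * A)).PosDef := by
  have hτ' : (τ ^ 2)⁻¹ ≠ 0 := by positivity
  have hσ' : (σ ^ 2)⁻¹ ≠ 0 := by positivity
  have hτI : ((τ ^ 2)⁻¹ • (1 : Matrix n n ℝ)).PosDef := PosDef.one.smul (by positivity)
  have hσI : ((σ ^ 2)⁻¹ • (1 : Matrix m m ℝ)).PosDef := PosDef.one.smul (by positivity)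
  have hwoodbury :
      ((τ ^ 2)⁻¹ • (1 : Matrix n n ℝ) + Aᵀ * ((σ ^ 2)⁻¹ • (1 : Matrix m m ℝ)) * A)⁻¹ =
        τ ^ 2 • (1 : Matrix n n ℝ) -
          τ ^ 4 • (Aᵀ * (σ ^ 2 • (1 : Matrix m m ℝ) + τ ^ 2 • (A * Aᵀ))⁻¹ * A) := by
    rw [add_mul_mul_inv_eq_sub _ Aᵀ _ A hτI.isUnit hσI.isUnit
      (by simpa [inv_smul_one, hτ', hσ'] using
        (posDef_smul_one_add_smul_mul_transpose hσ τ A).isUnit),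
      inv_smul_one hτ', inv_smul_one hσ', inv_inv, inv_inv]
    simp only [Matrix.smul_mul, Matrix.mul_smul, Matrix.one_mul, Matrix.mul_one, smul_smul]
    ring_nf
  exact hwoodbury ▸ (hτI.add_posSemidef (hσI.posSemidef.conjTranspose_mul_mul_same A)).inv

end Covariances

section Mixtures

variable {ι : Type*} [Fintype ι] [DecidableEq ι]

lemma abs_sum_mul_sub_le_sum_erase {wt p : ι → ℝ} (hwt : ∀ j, 0 ≤ wt j) (hsum : ∑ j, wt j = 1)
    (hp : ∀ j, p j ∈ Set.Icc (0 : ℝ) 1) (k : ι) :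
    |∑ j, wt j * p j - p k| ≤ ∑ j ∈ univ.erase k, wt j := by
  have hsplit : ∑ j, wt j * p j - p k = ∑ j ∈ univ.erase k, wt j * (p j - p k) := by
    rw [sum_erase _ (by simp)]
    simp only [mul_sub, sum_sub_distrib, ← sum_mul, hsum, one_mul]
  rw [hsplit]
  refine (abs_sum_le_sum_abs _ _).trans (sum_le_sum fun j _ => ?_)
  rw [abs_mul, abs_of_nonneg (hwt j)]
  refine mul_le_of_le_one_right (hwt j) (abs_sub_le_iff.mpr ⟨?_, ?_⟩) <;>
    linarith [(hp j).1, (hp j).2, (hp k).1, (hp k).2]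

lemma abs_toReal_sum_smul_apply_sub_le {α : Type*} [MeasurableSpace α] {ν : ι → Measure α}
    [∀ j, IsProbabilityMeasure (ν j)] {wt : ι → ℝ} (hwt : ∀ j, 0 ≤ wt j)
    (hsum : ∑ j, wt j = 1) (k : ι) (B : Set α) :
    |((∑ j, ENNReal.ofReal (wt j) • ν j) B).toReal - (ν k B).toReal| ≤
      ∑ j ∈ univ.erase k, wt j := by
  have hmix : ((∑ j, ENNReal.ofReal (wt j) • ν j) B).toReal = ∑ j, wt j * (ν j B).toReal := by
    simp only [Measure.finsetSum_apply, Measure.smul_apply, smul_eq_mul]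
    rw [ENNReal.toReal_sum fun j _ =>
      ENNReal.mul_ne_top ENNReal.ofReal_ne_top (measure_ne_top _ _)]
    simp only [ENNReal.toReal_mul, ENNReal.toReal_ofReal (hwt _)]
  rw [hmix]
  exact abs_sum_mul_sub_le_sum_erase hwt hsum
    (fun j => ⟨ENNReal.toReal_nonneg, ENNReal.toReal_le_of_le_ofReal zero_le_one
      (by simpa using prob_le_one)⟩) k

end Mixtures

theorem stmt_1_general (m n M : ℕ) (hm : 0 < m)
    (ystar : Fin m → ℝ) (A : Matrix (Fin m) (Fin n) ℝ)
    (σ τ : ℝ) (hσ : 0 < σ) (hτ : 0 < τ)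
    (μ : Fin M → Fin n → ℝ) (w : Fin M → ℝ) (hw : ∀ j, 0 < w j)
    -- Σ = σ² I_m + τ² A Aᵀ
    (Cov : Matrix (Fin m) (Fin m) ℝ)
    (hCov : Cov = σ ^ 2 • (1 : Matrix (Fin m) (Fin m) ℝ) + τ ^ 2 • (A * Aᵀ))
    -- scores s_j(y*)
    (s : Fin M → ℝ)
    (hs : ∀ j, s j =
      (1 / 2) * ((ystar - A *ᵥ μ j) ⬝ᵥ (Cov⁻¹ *ᵥ (ystar - A *ᵥ μ j))))
    -- normalized posterior weights w̃_j ∝ w_j φ(y*; A μ_j, Σ), ∑_j w̃_j = 1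
    (wt : Fin M → ℝ)
    (hwt : ∀ j, wt j =
      w j * gaussDensity Cov (A *ᵥ μ j) ystar /
        ∑ i, w i * gaussDensity Cov (A *ᵥ μ i) ystar)
    (mpost : Fin M → Fin n → ℝ)
    -- posterior covariance Σ_post = τ² I_n − τ⁴ Aᵀ Σ⁻¹ A
    (CovPost : Matrix (Fin n) (Fin n) ℝ)
    (hCovPost : CovPost =
      τ ^ 2 • (1 : Matrix (Fin n) (Fin n) ℝ) - τ ^ 4 • (Aᵀ * Cov⁻¹ * A))
    -- the posterior mixture π(· | y*) = ∑_j w̃_j N(m_j(y*), Σ_post)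
    (post : Measure (Fin n → ℝ))
    (hpost : post = ∑ j, ENNReal.ofReal (wt j) • gaussMeasure CovPost (mpost j))
    -- (1) bounded weight ratio
    (C : ℝ) (hC : 1 < C)
    (hratio : ∀ i j, 1 / C ≤ w i / w j ∧ w i / w j ≤ C)
    -- (2) δ₀-identifiability
    (jstar : Fin M)
    (δ₀ : ℝ)
    (hgap : ∀ j, j ≠ jstar → δ₀ ≤ (s j - s jstar) / m) :
    ∀ B : Set (Fin n → ℝ), MeasurableSet B →
      |(post B).toReal - ((gaussMeasure CovPost (mpost jstar)) B).toReal| ≤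
        C * M * Real.exp (-δ₀ * m) := by
  intro B _
  subst hCov hCovPost hpost
  have hCovPD := posDef_smul_one_add_smul_mul_transpose hσ.ne' τ A
  have : ∀ j, IsProbabilityMeasure (gaussMeasure _ (mpost j)) := fun j =>
    isProbabilityMeasure_gaussMeasure (posDef_posteriorCov hσ.ne' hτ.ne' A) (mpost j)
  have hv : ∀ j, 0 < w j * gaussDensity _ (A *ᵥ μ j) ystar := fun j =>
    mul_pos (hw j) (gaussDensity_pos hCovPD.det_pos _ _)
  have hwt0 : ∀ j, 0 ≤ wt j := fun j =>
    hwt j ▸ div_nonneg (hv j).le (sum_nonneg fun i _ => (hv i).le)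
  have hwt1 : ∑ j, wt j = 1 := by
    simp_rw [hwt, ← sum_div]
    exact div_self (sum_pos (fun i _ => hv i) ⟨jstar, mem_univ _⟩).ne'
  have hsmall : ∀ j ∈ univ.erase jstar, wt j ≤ C * Real.exp (-δ₀ * m) := by
    intro j hj
    have hgap' : δ₀ * m ≤ s j - s jstar :=
      (le_div_iff₀ (Nat.cast_pos.mpr hm)).mp (hgap j (ne_of_mem_erase hj))
    calc wt j ≤ w j / w jstar * Real.exp (s jstar - s j) := by
          rw [hwt, hs, hs]
          exact mul_gaussDensity_div_sum_le hCovPD.det_pos hw (fun i => A *ᵥ μ i) ystar j jstar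
      _ ≤ C * Real.exp (-δ₀ * m) := by
        gcongr
        · exact (hratio j jstar).2
        · linarith
  calc _ ≤ ∑ j ∈ univ.erase jstar, wt j := abs_toReal_sum_smul_apply_sub_le hwt0 hwt1 jstar B
    _ ≤ (univ.erase jstar).card • (C * Real.exp (-δ₀ * m)) := sum_le_card_nsmul _ _ _ hsmall
    _ ≤ M • (C * Real.exp (-δ₀ * m)) := nsmul_le_nsmul_left
      (mul_nonneg (by linarith) (Real.exp_pos _).le) (card_erase_le.trans_eq (card_fin M))
    _ = C * M * Real.exp (-δ₀ * m) := by rw [nsmul_eq_mul]; ring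

/-- Posterior collapse in total variation to the best-scoring Gaussian component,
for an isotropic Gaussian-mixture prior under a linear Gaussian measurement model.
The total-variation bound is stated as a uniform bound over all measurable sets. -/
theorem stmt_1 (m n M : ℕ) (hm : 0 < m)
    (ystar : Fin m → ℝ) (A : Matrix (Fin m) (Fin n) ℝ)
    (σ τ : ℝ) (hσ : 0 < σ) (hτ : 0 < τ)
    (μ : Fin M → Fin n → ℝ) (w : Fin M → ℝ) (hw : ∀ j, 0 < w j)
    (hwsum : ∑ j, w j = 1)
    -- Σ = σ² I_m + τ² A Aᵀ
    (Cov : Matrix (Fin m) (Fin m) ℝ)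
    (hCov : Cov = σ ^ 2 • (1 : Matrix (Fin m) (Fin m) ℝ) + τ ^ 2 • (A * Aᵀ))
    -- scores s_j(y*)
    (s : Fin M → ℝ)
    (hs : ∀ j, s j =
      (1 / 2) * ((ystar - A *ᵥ μ j) ⬝ᵥ (Cov⁻¹ *ᵥ (ystar - A *ᵥ μ j))))
    -- normalized posterior weights w̃_j ∝ w_j φ(y*; A μ_j, Σ), ∑_j w̃_j = 1
    (wt : Fin M → ℝ)
    (hwt : ∀ j, wt j =
      w j * gaussDensity Cov (A *ᵥ μ j) ystar /
        ∑ i, w i * gaussDensity Cov (A *ᵥ μ i) ystar)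
    -- posterior means m_j(y*) = μ_j + τ² Aᵀ Σ⁻¹ (y* − A μ_j)
    (mpost : Fin M → Fin n → ℝ)
    (hmpost : ∀ j, mpost j = μ j + τ ^ 2 • (Aᵀ * Cov⁻¹) *ᵥ (ystar - A *ᵥ μ j))
    -- posterior covariance Σ_post = τ² I_n − τ⁴ Aᵀ Σ⁻¹ A
    (CovPost : Matrix (Fin n) (Fin n) ℝ)
    (hCovPost : CovPost =
      τ ^ 2 • (1 : Matrix (Fin n) (Fin n) ℝ) - τ ^ 4 • (Aᵀ * Cov⁻¹ * A))
    -- the posterior mixture π(· | y*) = ∑_j w̃_j N(m_j(y*), Σ_post)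
    (post : Measure (Fin n → ℝ))
    (hpost : post = ∑ j, ENNReal.ofReal (wt j) • gaussMeasure CovPost (mpost j))
    -- (1) bounded weight ratio
    (C : ℝ) (hC : 1 < C)
    (hratio : ∀ i j, 1 / C ≤ w i / w j ∧ w i / w j ≤ C)
    -- (2) δ₀-identifiability
    (jstar : Fin M) (hmin : ∀ j, j ≠ jstar → s jstar < s j)
    (δ₀ : ℝ) (hδ₀ : 0 < δ₀)
    (hgap : ∀ j, j ≠ jstar → δ₀ ≤ (s j - s jstar) / m) :
    ∀ B : Set (Fin n → ℝ), MeasurableSet B →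
      |(post B).toReal - ((gaussMeasure CovPost (mpost jstar)) B).toReal| ≤
        C * M * Real.exp (-δ₀ * m) :=
  stmt_1_general m n M hm ystar A σ τ hσ hτ μ w hw Cov hCov s hs wt hwt mpost CovPost hCovPost post
    hpost C hC hratio jstar δ₀ hgap
end

section
/- Let y* ∈ ℝ^m, A ∈ ℝ^{m×n}, σ > 0, and let μ_1, …, μ_M ∈ ℝ^n, τ_1, …, τ_M > 0, with positive weights w_1, …, w_M summing to 1. Set Σ_j = σ² I_m + τ_j² A Aᵀ, s_j(y*) = (1/2)(y* − A μ_j)ᵀ Σ_j⁻¹ (y* − A μ_j), and the selection score ℓ_j(y*) = s_j(y*) + (1/2) log det(Σ_j). Let w̃_j(y*) = w_j φ(y*; A μ_j, Σ_j) / ∑_{i=1}^M w_i φ(y*; A μ_i, Σ_i). Assume (1) there exists C > 1 with 1/C ≤ w_i/w_j ≤ C for all i, j, and (2) there is a unique minimizer j* of ℓ_j(y*) and (ℓ_{(2)}(y*) − ℓ_{(1)}(y*))/m ≥ δ₀ for some δ₀ > 0, where ℓ_{(1)}, ℓ_{(2)} are the smallest and second smallest selection scores. Then ∑_{j ≠ j*}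 w̃_j(y*) ≤ C·M·exp(−m·δ₀). -/
open MeasureTheory Matrix Finset

/-!
Each marginal density is `φ(y*; Aμ_j, Σ_j) = (2π)^{-m/2} exp(-ℓ_j)`, so the posterior weights are
a softmax of `log w_j - ℓ_j`. Dropping every term but the `j*`-th from the normaliser gives
`w̃_j ≤ (w_j / w_{j*}) exp(-(ℓ_j - ℓ_{j*})) ≤ C exp(-m δ₀)` for `j ≠ j*`, and there are fewer
than `M` such `j`.
-/

theorem Matrix.posDef_smul_one_add_smul_mul_transpose {m n : Type*} [Fintype m] [Fintype n]
    [DecidableEq m] (A : Matrix m n ℝ) {a b : ℝ} (ha : 0 < a) (hb : 0 ≤ b) :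
    (a • (1 : Matrix m m ℝ) + b • (A * Aᵀ)).PosDef := by
  have hAAt : (A * Aᵀ).PosSemidef := by
    simpa using posSemidef_self_mul_conjTranspose A
  exact (PosDef.one.smul ha).add_posSemidef (hAAt.smul hb)

theorem gaussDensity_eq_mul_exp {ι : Type*} [Fintype ι] [DecidableEq ι]
    {S : Matrix ι ι ℝ} (hS : 0 < S.det) (μ x : ι → ℝ) :
    gaussDensity S μ x = (2 * Real.pi) ^ (-(Fintype.card ι : ℝ) / 2) *
      Real.exp (-((1 / 2) * ((x - μ) ⬝ᵥ (S⁻¹ *ᵥ (x - μ))) + (1 / 2) * Real.log S.det)) := by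
  rw [gaussDensity, Real.rpow_def_of_pos hS, mul_assoc, ← Real.exp_add]
  ring_nf

theorem div_sum_le_div_of_pos {ι : Type*} [Fintype ι] {f : ι → ℝ} (hf : ∀ i, 0 < f i)
    (j k : ι) : f j / ∑ i, f i ≤ f j / f k :=
  div_le_div_of_nonneg_left (hf j).le (hf k)
    (single_le_sum (fun i _ => (hf i).le) (mem_univ k))

theorem mul_exp_neg_div_sum_le {ι : Type*} [Fintype ι] {w : ι → ℝ} (hw : ∀ i, 0 < w i)
    {c : ℝ} (hc : 0 < c) (ℓ : ι → ℝ) (j k : ι) :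
    w j * (c * Real.exp (-ℓ j)) / ∑ i, w i * (c * Real.exp (-ℓ i)) ≤
      w j / w k * Real.exp (-(ℓ j - ℓ k)) := by
  refine (div_sum_le_div_of_pos (f := fun i => w i * (c * Real.exp (-ℓ i)))
    (fun i => by have := hw i; positivity) j k).trans_eq ?_
  rw [neg_sub, sub_eq_add_neg, Real.exp_add]
  field_simp [(hw k).ne', hc.ne', (Real.exp_pos (-ℓ k)).ne']
  rw [mul_assoc, ← Real.exp_add, neg_add_cancel, Real.exp_zero, mul_one]

theorem stmt_2_general (m n M : ℕ) (hm : 0 < m)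
    (ystar : Fin m → ℝ) (A : Matrix (Fin m) (Fin n) ℝ)
    (σ : ℝ) (hσ : 0 < σ)
    (μ : Fin M → Fin n → ℝ) (τ : Fin M → ℝ)
    (w : Fin M → ℝ) (hw : ∀ j, 0 < w j)
    -- Σ_j = σ² I_m + τ_j² A Aᵀ
    (Cov : Fin M → Matrix (Fin m) (Fin m) ℝ)
    (hCov : ∀ j, Cov j =
      σ ^ 2 • (1 : Matrix (Fin m) (Fin m) ℝ) + (τ j) ^ 2 • (A * Aᵀ))
    -- scores s_j(y*)
    (s : Fin M → ℝ)
    (hs : ∀ j, s j =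
      (1 / 2) * ((ystar - A *ᵥ μ j) ⬝ᵥ ((Cov j)⁻¹ *ᵥ (ystar - A *ᵥ μ j))))
    -- selection scores ℓ_j(y*) = s_j(y*) + (1/2) log det Σ_j
    (ℓ : Fin M → ℝ)
    (hℓ : ∀ j, ℓ j = s j + (1 / 2) * Real.log (Cov j).det)
    -- normalized posterior weights
    (wt : Fin M → ℝ)
    (hwt : ∀ j, wt j =
      w j * gaussDensity (Cov j) (A *ᵥ μ j) ystar /
        ∑ i, w i * gaussDensity (Cov i) (A *ᵥ μ i) ystar)
    -- (1) bounded weight ratio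
    (C : ℝ)
    (hratio : ∀ i j, 1 / C ≤ w i / w j ∧ w i / w j ≤ C)
    -- (2) δ₀-identifiability in selection score
    (jstar : Fin M)
    (δ₀ : ℝ)
    (hgap : ∀ j, j ≠ jstar → δ₀ ≤ (ℓ j - ℓ jstar) / m) :
    ∑ j ∈ univ \ {jstar}, wt j ≤ C * M * Real.exp (-(m : ℝ) * δ₀) := by
  set c : ℝ := (2 * Real.pi) ^ (-(m : ℝ) / 2)
  have hdensity : ∀ j, gaussDensity (Cov j) (A *ᵥ μ j) ystar = c * Real.exp (-ℓ j) := by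
    intro j
    have hdet : 0 < (Cov j).det := by
      rw [hCov j]
      exact (posDef_smul_one_add_smul_mul_transpose A (pow_pos hσ 2) (sq_nonneg _)).det_pos
    rw [gaussDensity_eq_mul_exp hdet, Fintype.card_fin, hℓ j, hs j]
  have hterm : ∀ j ∈ univ \ {jstar}, wt j ≤ C * Real.exp (-(m : ℝ) * δ₀) := by
    intro j hj
    have hscore : -(ℓ j - ℓ jstar) ≤ -(m : ℝ) * δ₀ := by
      have := hgap j (by simpa using hj)
      rw [le_div_iff₀ (by exact_mod_cast hm)] at this
      linarith
    rw [hwt j]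
    simp only [hdensity]
    calc _ ≤ w j / w jstar * Real.exp (-(ℓ j - ℓ jstar)) :=
          mul_exp_neg_div_sum_le hw (by positivity) ℓ j jstar
      _ ≤ C * Real.exp (-(m : ℝ) * δ₀) :=
          mul_le_mul (hratio j jstar).2 (Real.exp_le_exp.mpr hscore) (Real.exp_pos _).le
            ((div_pos (hw j) (hw jstar)).le.trans (hratio j jstar).2)
  calc ∑ j ∈ univ \ {jstar}, wt j
      ≤ #(univ \ {jstar}) • (C * Real.exp (-(m : ℝ) * δ₀)) := sum_le_card_nsmul _ _ _ hterm
    _ ≤ M • (C * Real.exp (-(m : ℝ) * δ₀)) := by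
        have hC : 0 ≤ C := (div_pos (hw jstar) (hw jstar)).le.trans (hratio jstar jstar).2
        gcongr
        simpa using card_le_univ (univ \ {jstar})
    _ = C * M * Real.exp (-(m : ℝ) * δ₀) := by rw [nsmul_eq_mul]; ring

/-- Posterior component-selection probability bound for a heterogeneous-variance
Gaussian-mixture prior under a linear Gaussian measurement model, with the
selection score `ℓ_j = s_j + (1/2) log det Σ_j`. -/
theorem stmt_2 (m n M : ℕ) (hm : 0 < m)
    (ystar : Fin m → ℝ) (A : Matrix (Fin m) (Fin n) ℝ)
    (σ : ℝ) (hσ : 0 < σ)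
    (μ : Fin M → Fin n → ℝ) (τ : Fin M → ℝ) (hτ : ∀ j, 0 < τ j)
    (w : Fin M → ℝ) (hw : ∀ j, 0 < w j) (hwsum : ∑ j, w j = 1)
    -- Σ_j = σ² I_m + τ_j² A Aᵀ
    (Cov : Fin M → Matrix (Fin m) (Fin m) ℝ)
    (hCov : ∀ j, Cov j =
      σ ^ 2 • (1 : Matrix (Fin m) (Fin m) ℝ) + (τ j) ^ 2 • (A * Aᵀ))
    -- scores s_j(y*)
    (s : Fin M → ℝ)
    (hs : ∀ j, s j =
      (1 / 2) * ((ystar - A *ᵥ μ j) ⬝ᵥ ((Cov j)⁻¹ *ᵥ (ystar - A *ᵥ μ j))))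
    -- selection scores ℓ_j(y*) = s_j(y*) + (1/2) log det Σ_j
    (ℓ : Fin M → ℝ)
    (hℓ : ∀ j, ℓ j = s j + (1 / 2) * Real.log (Cov j).det)
    -- normalized posterior weights
    (wt : Fin M → ℝ)
    (hwt : ∀ j, wt j =
      w j * gaussDensity (Cov j) (A *ᵥ μ j) ystar /
        ∑ i, w i * gaussDensity (Cov i) (A *ᵥ μ i) ystar)
    -- (1) bounded weight ratio
    (C : ℝ) (hC : 1 < C)
    (hratio : ∀ i j, 1 / C ≤ w i / w j ∧ w i / w j ≤ C)
    -- (2) δ₀-identifiability in selection score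
    (jstar : Fin M) (hmin : ∀ j, j ≠ jstar → ℓ jstar < ℓ j)
    (δ₀ : ℝ) (hδ₀ : 0 < δ₀)
    (hgap : ∀ j, j ≠ jstar → δ₀ ≤ (ℓ j - ℓ jstar) / m) :
    ∑ j ∈ univ \ {jstar}, wt j ≤ C * M * Real.exp (-(m : ℝ) * δ₀) :=
  stmt_2_general m n M hm ystar A σ hσ μ τ w hw Cov hCov s hs ℓ hℓ wt hwt C hratio jstar δ₀ hgap
end
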